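/- Let Φ: ℝᵖ → ℝ be twice continuously differentiable and suppose there exists ε ≥ 0 such that all eigenvalues of ∇²Φ(w) lie in [−ε, Λ] for every w in a convex set C, where Λ ≥ ε > 0. Then for all u, v ∈ C: (∇Φ(u) − ∇Φ(v))ᵀ(u − v) ≥ (1/(2Λ))‖∇Φ(u) − ∇Φ(v)‖₂² − 2ε‖u − v‖₂². -/

import Mathlib

/-!
The averaged Hessian `H = ∫₀¹ ∇²Φ(v + t • (u - v)) dt` is symmetric, maps `u - v` to
`∇Φ(u) - ∇Φ(v)`, and its quadratic form lies in `[-ε‖x‖², Λ‖x‖²]` because the segment `[v, u]`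
lies in `C`. So it suffices to prove the inequality for one symmetric operator `A` with these
bounds. There `A + ε` is positive with quadratic form at most `(Λ + ε)‖x‖²`, and Cauchy–Schwarz
for the form `⟪(A + ε) ·, ·⟫` gives `‖(A + ε) d‖² ≤ (Λ + ε) ⟪(A + ε) d, d⟫`, which rearranges to
the claim. Unlike co-coercivity of `Φ + (ε/2)‖·‖²`, this never evaluates `∇Φ` outside `C`.
-/

open scoped RealInnerProductSpace
open Set MeasureTheory

namespace ContinuousLinearMap

variable {E : Type*} [NormedAddCommGroup E] [InnerProductSpace ℝ E]

theorem IsPositive.inner_apply_sq_le {M : E →L[ℝ] E} (hM : M.IsPositive) (x y : E) :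
    ⟪M x, y⟫ ^ 2 ≤ ⟪M x, x⟫ * ⟪M y, y⟫ := by
  have hquad : ∀ t : ℝ, 0 ≤ ⟪M y, y⟫ * (t * t) + 2 * ⟪M x, y⟫ * t + ⟪M x, x⟫ := by
    intro t
    have hsymm : ⟪M y, x⟫ = ⟪M x, y⟫ := by
      rw [hM.inner_left_eq_inner_right, real_inner_comm]
    have := hM.inner_nonneg_left (x + t • y)
    simp only [map_add, map_smul, inner_add_left, inner_add_right, real_inner_smul_left,
      real_inner_smul_right, hsymm] at this
    linarith
  have := discrim_le_zero hquad
  rw [discrim] at this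
  linarith

theorem IsPositive.norm_sq_apply_le {M : E →L[ℝ] E} (hM : M.IsPositive) {L : ℝ}
    (hL : ∀ x, ⟪M x, x⟫ ≤ L * ‖x‖ ^ 2) (x : E) : ‖M x‖ ^ 2 ≤ L * ⟪M x, x⟫ := by
  have hsq : ‖M x‖ ^ 2 * ‖M x‖ ^ 2 ≤ ‖M x‖ ^ 2 * (L * ⟪M x, x⟫) :=
    calc ‖M x‖ ^ 2 * ‖M x‖ ^ 2 = ⟪M x, M x⟫ ^ 2 := by rw [real_inner_self_eq_norm_sq]; ring
      _ ≤ ⟪M x, x⟫ * ⟪M (M x), M x⟫ := hM.inner_apply_sq_le x (M x)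
      _ ≤ ⟪M x, x⟫ * (L * ‖M x‖ ^ 2) := by gcongr; exacts [hM.inner_nonneg_left x, hL _]
      _ = ‖M x‖ ^ 2 * (L * ⟪M x, x⟫) := by ring
  rcases eq_or_ne (M x) 0 with h0 | hne
  · simp [h0]
  · exact le_of_mul_le_mul_left hsq (pow_pos (norm_pos_iff.mpr hne) 2)

theorem approximate_cocoercivity {A : E →L[ℝ] E} (hA : A.IsSymmetric) {ε Λ : ℝ}
    (hε : 0 ≤ ε) (hεΛ : ε ≤ Λ) (hbounds : ∀ x, ⟪A x, x⟫ ∈ Icc (-ε * ‖x‖ ^ 2) (Λ * ‖x‖ ^ 2))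
    (d : E) :
    ⟪A d, d⟫ ≥ (1 / (2 * Λ)) * ‖A d‖ ^ 2 - 2 * ε * ‖d‖ ^ 2 := by
  set M := A + ε • ContinuousLinearMap.id ℝ E
  have hM_inner (x : E) : ⟪M x, x⟫ = ⟪A x, x⟫ + ε * ‖x‖ ^ 2 := by
    simp [M, inner_add_left, real_inner_smul_left]
  have hM : M.IsPositive := by
    refine (isPositive_iff M).2 ⟨hA.add (LinearMap.IsSymmetric.id.smul rfl), fun x => ?_⟩
    rw [hM_inner]
    linarith [(hbounds x).1]
  have hM_le : ‖M d‖ ^ 2 ≤ (Λ + ε) * ⟪M d, d⟫ :=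
    hM.norm_sq_apply_le (fun x => by rw [hM_inner]; linarith [(hbounds x).2]) d
  have hM_norm : ‖M d‖ ^ 2 = ‖A d‖ ^ 2 + 2 * ε * ⟪A d, d⟫ + ε ^ 2 * ‖d‖ ^ 2 := by
    simp only [M, add_apply, smul_apply, id_apply, norm_add_sq_real, norm_smul,
      real_inner_smul_right, Real.norm_of_nonneg hε]
    ring
  rw [hM_inner, hM_norm] at hM_le
  have hlow := (hbounds d).1
  rcases (hε.trans hεΛ).eq_or_lt with hΛ | hΛ
  -- `Λ = 0` forces `ε = 0`, and then `1 / (2 * Λ) = 0` in Lean.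
  · obtain rfl : ε = 0 := by linarith
    simpa [← hΛ] using hlow
  rw [ge_iff_le, sub_le_iff_le_add, one_div_mul_eq_div, div_le_iff₀ (by positivity)]
  -- `hM_le` says `‖A d‖² ≤ (Λ - ε) ⟪A d, d⟫ + Λ ε ‖d‖²`; add `(Λ + ε) (⟪A d, d⟫ + ε ‖d‖²) ≥ 0`.
  have hn := sq_nonneg ‖d‖
  nlinarith [mul_nonneg (by linarith : 0 ≤ Λ + ε) (by linarith : 0 ≤ ⟪A d, d⟫ + ε * ‖d‖ ^ 2),
    mul_nonneg (mul_nonneg hε (sub_nonneg.2 hεΛ)) hn, mul_nonneg (mul_nonneg hε hΛ.le) hn]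

end ContinuousLinearMap

theorem intervalIntegral_mem_Icc_of_forall_mem_Icc {g : ℝ → ℝ}
    (hg : IntervalIntegrable g volume 0 1) {a b : ℝ}
    (h : ∀ t ∈ Icc (0:ℝ) 1, g t ∈ Icc a b) : ∫ t in (0:ℝ)..1, g t ∈ Icc a b :=
  ⟨by simpa using intervalIntegral.integral_mono_on zero_le_one intervalIntegrable_const hg
        fun t ht => (h t ht).1,
    by simpa using intervalIntegral.integral_mono_on zero_le_one hg intervalIntegrable_const
        fun t ht => (h t ht).2⟩

theorem sub_eq_intervalIntegral_fderiv_apply {E F : Type*} [NormedAddCommGroup E]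
    [NormedSpace ℝ E] [NormedAddCommGroup F] [NormedSpace ℝ F] [CompleteSpace F] {f : E → F}
    (hf : ContDiff ℝ 1 f) (u v : E) :
    f u - f v = (∫ t in (0:ℝ)..1, fderiv ℝ f (v + t • (u - v))) (u - v) := by
  have hcont : Continuous fun t : ℝ => fderiv ℝ f (v + t • (u - v)) :=
    (hf.continuous_fderiv one_ne_zero).comp (by fun_prop)
  rw [ContinuousLinearMap.intervalIntegral_apply (hcont.intervalIntegrable 0 1),
    intervalIntegral.integral_eq_sub_of_hasDerivAt (f := fun t => f (v + t • (u - v)))]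
  · simp
  · intro t _
    have hline : HasDerivAt (fun t : ℝ => v + t • (u - v)) (u - v) t := by
      simpa using ((hasDerivAt_id t).smul_const (u - v)).const_add v
    exact ((hf.differentiable one_ne_zero) _).hasFDerivAt.comp_hasDerivAt t hline
  · exact (hcont.clm_apply continuous_const).intervalIntegrable 0 1

section InnerProductSpace

variable {E : Type*} [NormedAddCommGroup E] [InnerProductSpace ℝ E] [CompleteSpace E]

theorem ContDiff.gradient {Φ : E → ℝ} {m n : WithTop ℕ∞} (hΦ : ContDiff ℝ n Φ)
    (hmn : m + 1 ≤ n) : ContDiff ℝ m (gradient Φ) :=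
  (InnerProductSpace.toDual ℝ E).symm.toContinuousLinearEquiv.contDiff.comp
    (hΦ.fderiv_right hmn)

theorem isSymmetric_fderiv_gradient {Φ : E → ℝ} {w : E} (hΦ : ContDiffAt ℝ 2 Φ w) :
    (fderiv ℝ (gradient Φ) w).IsSymmetric := by
  intro x y
  have hsymm := hΦ.isSymmSndFDerivAt (by simp)
  have hgrad : gradient Φ =
      (InnerProductSpace.toDual ℝ E).symm.toContinuousLinearEquiv ∘ fderiv ℝ Φ := rfl
  rw [hgrad, ContinuousLinearEquiv.comp_fderiv]
  change ⟪(InnerProductSpace.toDual ℝ E).symm (fderiv ℝ (fderiv ℝ Φ) w x), y⟫ =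
    ⟪x, (InnerProductSpace.toDual ℝ E).symm (fderiv ℝ (fderiv ℝ Φ) w y)⟫
  rw [← real_inner_comm x, InnerProductSpace.toDual_symm_apply,
    InnerProductSpace.toDual_symm_apply]
  exact hsymm.eq x y

theorem inner_intervalIntegral_apply {A : ℝ → E →L[ℝ] E} {a b : ℝ}
    (hA : IntervalIntegrable A volume a b) (x y : E) :
    ⟪(∫ t in a..b, A t) x, y⟫ = ∫ t in a..b, ⟪A t x, y⟫ := by
  have := ((innerSL ℝ y).comp (ContinuousLinearMap.apply ℝ E x)).intervalIntegral_comp_comm hA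
  simpa [real_inner_comm y] using this.symm

theorem isSymmetric_intervalIntegral {A : ℝ → E →L[ℝ] E} {a b : ℝ}
    (hA : IntervalIntegrable A volume a b) (hsymm : ∀ t, (A t).IsSymmetric) :
    (∫ t in a..b, A t).IsSymmetric := by
  intro x y
  change ⟪(∫ t in a..b, A t) x, y⟫ = ⟪x, (∫ t in a..b, A t) y⟫
  rw [← real_inner_comm x, inner_intervalIntegral_apply hA, inner_intervalIntegral_apply hA]
  congr 1 with t
  exact (hsymm t x y).trans (real_inner_comm _ _)

end InnerProductSpace

/-- Approximate co-coercivity: if the Hessian eigenvalues of `Φ` lie in `[-ε, Λ]` on a convex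
set `C`, then `⟪∇Φ(u) - ∇Φ(v), u - v⟫ ≥ (1/(2Λ))‖∇Φ(u)-∇Φ(v)‖² - 2ε‖u-v‖²`. -/
theorem approximate_cocoercivity {p : ℕ}
    (Φ : EuclideanSpace ℝ (Fin p) → ℝ) (hΦ : ContDiff ℝ 2 Φ)
    (C : Set (EuclideanSpace ℝ (Fin p))) (hC : Convex ℝ C)
    (ε Λ : ℝ) (hε : 0 < ε) (hΛ : ε ≤ Λ)
    (hHess : ∀ w ∈ C, ∀ v : EuclideanSpace ℝ (Fin p),
      -ε * ‖v‖ ^ 2 ≤ ⟪fderiv ℝ (gradient Φ) w v, v⟫ ∧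
        ⟪fderiv ℝ (gradient Φ) w v, v⟫ ≤ Λ * ‖v‖ ^ 2) :
    ∀ u ∈ C, ∀ v ∈ C,
      ⟪gradient Φ u - gradient Φ v, u - v⟫ ≥
        (1 / (2 * Λ)) * ‖gradient Φ u - gradient Φ v‖ ^ 2 - 2 * ε * ‖u - v‖ ^ 2 := by
  intro u hu v hv
  have hgrad : ContDiff ℝ 1 (gradient Φ) := hΦ.gradient (by norm_num)
  have hHess_cont : Continuous fun t : ℝ => fderiv ℝ (gradient Φ) (v + t • (u - v)) :=
    (hgrad.continuous_fderiv one_ne_zero).comp (by fun_prop)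
  have hint := hHess_cont.intervalIntegrable (μ := volume) 0 1
  rw [sub_eq_intervalIntegral_fderiv_apply hgrad u v]
  refine ContinuousLinearMap.approximate_cocoercivity
    (isSymmetric_intervalIntegral hint fun t => isSymmetric_fderiv_gradient hΦ.contDiffAt)
    hε.le hΛ (fun x => ?_) (u - v)
  rw [inner_intervalIntegral_apply hint]
  exact intervalIntegral_mem_Icc_of_forall_mem_Icc
    (((hHess_cont.clm_apply continuous_const).inner continuous_const).intervalIntegrable 0 1)
    fun t ht => hHess _ (hC.add_smul_sub_mem hv hu ht) x
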